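/- The modified Lovász theta function is multiplicative over the tensor (categorical complement-style) product arising from tensor products of association schemes: if S_1, S_2 are commutative association schemes with distinguished relation sets D_1, D_2 each containing the diagonal, then ϑ'(G_{S_1⊗S_2}(D_1⊗D_2)) = ϑ'(G_{S_1}(D_1)) · ϑ'(G_{S_2}(D_2)), where G_S(D) is the graph on the point set of S with an edge between x,y whenever their relation lies outside D. -/

import Mathlib

open Finset

/-- An association scheme on a finite set `X`: a partition of `X × X` into nonempty relations
containing the diagonal, closed under transposition, and with well-defined intersection
numbers. -/
structure AssocScheme (X : Type*) [Fintype X] where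
  rels : Set (Set (X × X))
  nonempty_rel : ∀ r ∈ rels, r.Nonempty
  existsUnique_rel : ∀ p : X × X, ∃! r, r ∈ rels ∧ p ∈ r
  diag_mem : {p : X × X | p.1 = p.2} ∈ rels
  transpose_mem : ∀ r ∈ rels, {p : X × X | (p.2, p.1) ∈ r} ∈ rels
  inter_num : ∀ r ∈ rels, ∀ s ∈ rels, ∀ t ∈ rels, ∀ p q : X × X, p ∈ t → q ∈ t →
    {z : X | (p.1, z) ∈ r ∧ (z, p.2) ∈ s}.ncard = {z : X | (q.1, z) ∈ r ∧ (z, q.2) ∈ s}.ncard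

/-- A commutative association scheme: the intersection numbers satisfy `p_{rs}^t = p_{sr}^t`. -/
def AssocScheme.Commutative {X : Type*} [Fintype X] (S : AssocScheme X) : Prop :=
  ∀ r ∈ S.rels, ∀ s ∈ S.rels, ∀ p : X × X,
    {z : X | (p.1, z) ∈ r ∧ (z, p.2) ∈ s}.ncard = {z : X | (p.1, z) ∈ s ∧ (z, p.2) ∈ r}.ncard

/-- The modified Lovász theta function `ϑ'` of a graph given by an adjacency predicate:
the optimum of `⟨J, M⟩` over symmetric PSD matrices `M` with trace `1`, vanishing on edges,
and with nonnegative entries. -/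
noncomputable def thetaPrime (V : Type*) [Fintype V] (Adj : V → V → Prop) : ℝ :=
  sSup {t : ℝ | ∃ M : Matrix V V ℝ, M.PosSemidef ∧ Matrix.trace M = 1 ∧
    (∀ u v, Adj u v → M u v = 0) ∧ (∀ u v, 0 ≤ M u v) ∧ t = ∑ u : V, ∑ v : V, M u v}

section ThetaAux

open scoped Matrix

variable {V : Type*} [Fintype V]

lemma quadForm_eq (M : Matrix V V ℝ) (v : V → ℝ) :
    star v ⬝ᵥ (M *ᵥ v) = ∑ x, ∑ y, v x * M x y * v y := by
  simp [dotProduct, Matrix.mulVec, Finset.mul_sum, mul_assoc]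

lemma psd_sum_quad {M : Matrix V V ℝ} (hM : M.PosSemidef) (v : V → ℝ) :
    0 ≤ ∑ x, ∑ y, v x * M x y * v y := by
  rw [← quadForm_eq]; exact hM.dotProduct_mulVec_nonneg v

lemma psd_entry_add {M : Matrix V V ℝ} (hM : M.PosSemidef) (x y : V) :
    M x y + M y x ≤ M x x + M y y := by
  classical
  rcases eq_or_ne x y with rfl | hxy
  · exact le_rfl
  · have h := psd_sum_quad hM (fun i => (if i = x then (1:ℝ) else 0) - if i = y then 1 else 0)
    simp only [sub_mul, mul_sub, ite_mul, one_mul, zero_mul, mul_ite, mul_one, mul_zero,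
      Finset.sum_sub_distrib, Finset.sum_ite_eq', Finset.mem_univ, if_true] at h
    linarith

lemma psd_sum_le_card_mul_trace {M : Matrix V V ℝ} (hM : M.PosSemidef) :
    ∑ x, ∑ y, M x y ≤ (Fintype.card V : ℝ) * M.trace := by
  have h1 : ∑ x : V, ∑ y : V, (M x y + M y x) ≤ ∑ x : V, ∑ y : V, (M x x + M y y) :=
    Finset.sum_le_sum fun x _ => Finset.sum_le_sum fun y _ => psd_entry_add hM x y
  have h2 : ∑ x : V, ∑ y : V, (M x y + M y x) = 2 * ∑ x : V, ∑ y : V, M x y := by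
    simp only [Finset.sum_add_distrib, two_mul]
    congr 1
    exact Finset.sum_comm
  have h3 : ∑ x : V, ∑ y : V, (M x x + M y y) = 2 * ((Fintype.card V : ℝ) * M.trace) := by
    have e1 : ∀ x : V, ∑ y : V, (M x x + M y y) = (Fintype.card V : ℝ) * M x x + M.trace := by
      intro x
      rw [Finset.sum_add_distrib]
      simp [Matrix.trace, Matrix.diag, Finset.card_univ, nsmul_eq_mul]
    rw [Finset.sum_congr rfl fun x _ => e1 x, Finset.sum_add_distrib, ← Finset.mul_sum]
    simp [Matrix.trace, Matrix.diag, Finset.card_univ, nsmul_eq_mul]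
    ring
  linarith

lemma psd_smul' {M : Matrix V V ℝ} (hM : M.PosSemidef) {c : ℝ} (hc : 0 ≤ c) :
    (c • M).PosSemidef := by
  refine Matrix.PosSemidef.of_dotProduct_mulVec_nonneg ?_ (fun v => ?_)
  · rw [Matrix.IsHermitian, Matrix.conjTranspose_smul, star_trivial, hM.1]
  · rw [Matrix.smul_mulVec, dotProduct_smul, smul_eq_mul]
    exact mul_nonneg hc (hM.dotProduct_mulVec_nonneg v)

/-- The feasible-value set of the `ϑ'` SDP. -/
def thetaSet (V : Type*) [Fintype V] (Adj : V → V → Prop) : Set ℝ :=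
  {t : ℝ | ∃ M : Matrix V V ℝ, M.PosSemidef ∧ Matrix.trace M = 1 ∧
    (∀ u v, Adj u v → M u v = 0) ∧ (∀ u v, 0 ≤ M u v) ∧ t = ∑ u : V, ∑ v : V, M u v}

lemma thetaPrime_eq (V : Type*) [Fintype V] (Adj : V → V → Prop) :
    thetaPrime V Adj = sSup (thetaSet V Adj) := rfl

lemma thetaSet_le_card {Adj : V → V → Prop} : ∀ t ∈ thetaSet V Adj, t ≤ (Fintype.card V : ℝ) := by
  rintro t ⟨M, hpsd, htr, -, -, rfl⟩
  have h := psd_sum_le_card_mul_trace hpsd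
  rwa [htr, mul_one] at h

lemma thetaSet_bddAbove (Adj : V → V → Prop) : BddAbove (thetaSet V Adj) :=
  ⟨(Fintype.card V : ℝ), fun _ ht => thetaSet_le_card _ ht⟩

lemma one_mem_thetaSet [DecidableEq V] [Nonempty V] {Adj : V → V → Prop}
    (h : ∀ u v, Adj u v → u ≠ v) : (1:ℝ) ∈ thetaSet V Adj := by
  have hc : (0:ℝ) < (Fintype.card V : ℝ) := by exact_mod_cast Fintype.card_pos
  refine ⟨(Fintype.card V : ℝ)⁻¹ • 1, psd_smul' Matrix.PosSemidef.one (by positivity),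
    ?_, ?_, ?_, ?_⟩
  · rw [Matrix.trace_smul, Matrix.trace_one, smul_eq_mul, inv_mul_cancel₀ hc.ne']
  · intro u v huv
    simp [Matrix.one_apply_ne (h u v huv)]
  · intro u v
    rcases eq_or_ne u v with rfl | huv
    · simp [Matrix.one_apply_eq]

    · simp [Matrix.one_apply_ne huv]
  · have : ∀ u : V, ∑ v : V, ((Fintype.card V : ℝ)⁻¹ • (1 : Matrix V V ℝ)) u v
        = (Fintype.card V : ℝ)⁻¹ := by
      intro u
      simp [Matrix.one_apply, Finset.sum_ite_eq]
    rw [Finset.sum_congr rfl fun u _ => this u]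
    simp [Finset.card_univ]

lemma one_le_thetaPrime [DecidableEq V] [Nonempty V] {Adj : V → V → Prop}
    (h : ∀ u v, Adj u v → u ≠ v) : (1:ℝ) ≤ thetaPrime V Adj :=
  le_csSup (thetaSet_bddAbove Adj) (one_mem_thetaSet h)

lemma mul_mem_thetaSet_prod {V W : Type*} [Fintype V] [Fintype W]
    (AdjV : V → V → Prop) (AdjW : W → W → Prop) (AdjP : V × W → V × W → Prop)
    (hP : ∀ p q : V × W, AdjP p q → AdjV p.1 q.1 ∨ AdjW p.2 q.2)
    {t₁ t₂ : ℝ} (h₁ : t₁ ∈ thetaSet V AdjV) (h₂ : t₂ ∈ thetaSet W AdjW) :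
    t₁ * t₂ ∈ thetaSet (V × W) AdjP := by
  classical
  obtain ⟨A, hApsd, hAtr, hAedge, hAnn, rfl⟩ := h₁
  obtain ⟨B, hBpsd, hBtr, hBedge, hBnn, rfl⟩ := h₂
  refine ⟨fun p q => A p.1 q.1 * B p.2 q.2, ?_, ?_, ?_, ?_, ?_⟩
  · exact Matrix.PosSemidef.kronecker hApsd hBpsd
  · have htr : Matrix.trace ((fun p q : V × W => A p.1 q.1 * B p.2 q.2) :
        Matrix (V × W) (V × W) ℝ) = Matrix.trace A * Matrix.trace B := by
      simp [Matrix.trace, Matrix.diag, Fintype.sum_prod_type, Finset.sum_mul_sum]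
    rw [htr, hAtr, hBtr, one_mul]
  · intro p q hpq
    show A p.1 q.1 * B p.2 q.2 = 0
    rcases hP p q hpq with h | h
    · rw [hAedge _ _ h, zero_mul]
    · rw [hBedge _ _ h, mul_zero]
  · intro p q
    exact mul_nonneg (hAnn _ _) (hBnn _ _)
  · have hval : ∑ p : V × W, ∑ q : V × W, A p.1 q.1 * B p.2 q.2
        = (∑ x, ∑ y, A x y) * (∑ a, ∑ b, B a b) := by
      rw [Finset.sum_mul_sum, Fintype.sum_prod_type]
      refine Finset.sum_congr rfl fun x _ => ?_
      refine Finset.sum_congr rfl fun a _ => ?_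
      rw [Finset.sum_mul_sum, Fintype.sum_prod_type]
    exact hval.symm

lemma le_mul_of_mem_prod {V W : Type*} [Fintype V] [Fintype W]
    (AdjV : V → V → Prop) (AdjW : W → W → Prop) (AdjP : V × W → V × W → Prop)
    (hVP : ∀ x y a b, AdjV x y → AdjP (x, a) (y, b))
    (hWP : ∀ x a b, AdjW a b → AdjP (x, a) (x, b))
    (h0V : 0 ≤ thetaPrime V AdjV)
    {t : ℝ} (ht : t ∈ thetaSet (V × W) AdjP) :
    t ≤ thetaPrime V AdjV * thetaPrime W AdjW := by
  classical
  obtain ⟨M, hpsd, htr, hedge, hnn, rfl⟩ := ht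
  have hsymm : ∀ p q, M q p = M p q := fun p q => by
    have h := hpsd.1.apply p q
    simpa using h
  set θV := thetaPrime V AdjV with hθVdef
  set θW := thetaPrime W AdjW with hθWdef
  -- diagonal blocks give the bound on the partial trace
  have hblock : ∀ x : V, ∑ a, ∑ b, M (x, a) (x, b) ≤ θW * ∑ a, M (x, a) (x, a) := by
    intro x
    set Mx : Matrix W W ℝ := fun a b => M (x, a) (x, b) with hMx
    have hxpsd : Mx.PosSemidef := by
      refine Matrix.PosSemidef.of_dotProduct_mulVec_nonneg ?_ ?_
      · ext a b
        simp only [Matrix.conjTranspose_apply, star_trivial]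
        exact hsymm _ _
      · intro v
        rw [quadForm_eq]
        have h := psd_sum_quad hpsd (fun p => if p.1 = x then v p.2 else 0)
        simp only [Fintype.sum_prod_type, ite_mul, zero_mul, mul_ite, mul_zero,
          Finset.sum_ite_irrel, Finset.sum_const_zero, Finset.sum_ite_eq',
          Finset.mem_univ, if_true] at h
        exact h
    have hxtr : Matrix.trace Mx = ∑ a, M (x, a) (x, a) := by
      simp [Matrix.trace, Matrix.diag, hMx]
    set s := ∑ a, M (x, a) (x, a) with hs
    have hs0 : 0 ≤ s := Finset.sum_nonneg fun a _ => hnn _ _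
    rcases hs0.eq_or_lt with hseq | hspos
    · have hb := psd_sum_le_card_mul_trace hxpsd
      rw [hxtr, ← hseq, mul_zero] at hb
      rw [← hseq, mul_zero]
      exact hb
    · have hmem : s⁻¹ * (∑ a, ∑ b, M (x, a) (x, b)) ∈ thetaSet W AdjW := by
        refine ⟨s⁻¹ • Mx, psd_smul' hxpsd (inv_nonneg.mpr hs0), ?_, ?_, ?_, ?_⟩
        · rw [Matrix.trace_smul, hxtr, smul_eq_mul, inv_mul_cancel₀ hspos.ne']
        · intro a b hab
          have hz : M (x, a) (x, b) = 0 := hedge _ _ (hWP x a b hab)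
          exact (mul_eq_zero_of_right _ hz : s⁻¹ * M (x, a) (x, b) = 0)
        · intro a b
          simp only [Matrix.smul_apply, smul_eq_mul]
          exact mul_nonneg (inv_nonneg.mpr hs0) (hnn _ _)
        · simp only [Finset.mul_sum]; rfl
      have hle := le_csSup (thetaSet_bddAbove AdjW) hmem
      calc ∑ a, ∑ b, M (x, a) (x, b)
          = s * (s⁻¹ * ∑ a, ∑ b, M (x, a) (x, b)) := by
            field_simp
        _ ≤ s * θW := mul_le_mul_of_nonneg_left hle hs0
        _ = θW * s := mul_comm _ _
  -- the compressed matrix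
  set N : Matrix V V ℝ := fun x y => ∑ a, ∑ b, M (x, a) (y, b) with hN
  have hNpsd : N.PosSemidef := by
    refine Matrix.PosSemidef.of_dotProduct_mulVec_nonneg ?_ ?_
    · ext x y
      simp only [Matrix.conjTranspose_apply, star_trivial, hN]
      calc ∑ a, ∑ b, M (y, a) (x, b) = ∑ a, ∑ b, M (x, b) (y, a) := by
            exact Finset.sum_congr rfl fun a _ => Finset.sum_congr rfl fun b _ => hsymm _ _
        _ = ∑ a, ∑ b, M (x, a) (y, b) := Finset.sum_comm
    · intro v
      rw [quadForm_eq]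
      have h := psd_sum_quad hpsd (fun p => v p.1)
      simp only [Fintype.sum_prod_type] at h
      have e : ∀ x y : V, v x * N x y * v y = ∑ a, ∑ b, v x * M (x, a) (y, b) * v y := by
        intro x y
        simp [hN, Finset.mul_sum, Finset.sum_mul]
      calc (0:ℝ) ≤ ∑ x, ∑ a, ∑ y, ∑ b, v x * M (x, a) (y, b) * v y := h
        _ = ∑ x, ∑ y, ∑ a, ∑ b, v x * M (x, a) (y, b) * v y :=
            Finset.sum_congr rfl fun x _ => Finset.sum_comm
        _ = ∑ x, ∑ y, v x * N x y * v y :=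
            Finset.sum_congr rfl fun x _ => Finset.sum_congr rfl fun y _ => (e x y).symm
  have hNtr : Matrix.trace N = ∑ x, ∑ a, ∑ b, M (x, a) (x, b) := by
    simp [Matrix.trace, Matrix.diag, hN]
  have hMtr : ∑ x, ∑ a, M (x, a) (x, a) = 1 := by
    rw [← htr]
    simp [Matrix.trace, Matrix.diag, Fintype.sum_prod_type]
  have hτθ : Matrix.trace N ≤ θW := by
    rw [hNtr]
    calc ∑ x, ∑ a, ∑ b, M (x, a) (x, b) ≤ ∑ x, θW * ∑ a, M (x, a) (x, a) :=
          Finset.sum_le_sum fun x _ => hblock x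
      _ = θW * ∑ x, ∑ a, M (x, a) (x, a) := by rw [← Finset.mul_sum]
      _ = θW := by rw [hMtr, mul_one]
  have hval : ∑ p : V × W, ∑ q : V × W, M p q = ∑ x, ∑ y, N x y := by
    rw [Fintype.sum_prod_type]
    refine Finset.sum_congr rfl fun x _ => ?_
    calc ∑ a, ∑ q : V × W, M (x, a) q = ∑ a, ∑ y, ∑ b, M (x, a) (y, b) :=
          Finset.sum_congr rfl fun a _ => by rw [Fintype.sum_prod_type]
      _ = ∑ y, ∑ a, ∑ b, M (x, a) (y, b) := Finset.sum_comm
      _ = ∑ y, N x y := rfl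
  have hτ0 : 0 ≤ Matrix.trace N := by
    rw [hNtr]
    exact Finset.sum_nonneg fun x _ => Finset.sum_nonneg fun a _ =>
      Finset.sum_nonneg fun b _ => hnn _ _
  have hθW0 : 0 ≤ θW := le_trans hτ0 hτθ
  rcases hτ0.eq_or_lt with hτeq | hτpos
  · have hb := psd_sum_le_card_mul_trace hNpsd
    rw [← hτeq, mul_zero] at hb
    rw [hval]
    exact le_trans hb (mul_nonneg h0V hθW0)
  · have hNnn : ∀ x y, 0 ≤ N x y := fun x y =>
      Finset.sum_nonneg fun a _ => Finset.sum_nonneg fun b _ => hnn _ _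
    have hmem : (Matrix.trace N)⁻¹ * (∑ x, ∑ y, N x y) ∈ thetaSet V AdjV := by
      refine ⟨(Matrix.trace N)⁻¹ • N, psd_smul' hNpsd (inv_nonneg.mpr hτ0), ?_, ?_, ?_, ?_⟩
      · rw [Matrix.trace_smul, smul_eq_mul, inv_mul_cancel₀ hτpos.ne']
      · intro x y hxy
        have hz : ∀ a b, M (x, a) (y, b) = 0 := fun a b => hedge _ _ (hVP x y a b hxy)
        show (Matrix.trace N)⁻¹ * ∑ a, ∑ b, M (x, a) (y, b) = 0
        simp [hz]
      · intro x y
        simp only [Matrix.smul_apply, smul_eq_mul]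
        exact mul_nonneg (inv_nonneg.mpr hτ0) (hNnn x y)
      · simp only [Matrix.smul_apply, smul_eq_mul, ← Finset.mul_sum]
    have hle := le_csSup (thetaSet_bddAbove AdjV) hmem
    rw [hval]
    calc ∑ x, ∑ y, N x y
        = Matrix.trace N * ((Matrix.trace N)⁻¹ * ∑ x, ∑ y, N x y) := by
          field_simp
      _ ≤ Matrix.trace N * θV := mul_le_mul_of_nonneg_left hle hτ0
      _ = θV * Matrix.trace N := mul_comm _ _
      _ ≤ θV * θW := mul_le_mul_of_nonneg_left hτθ h0V

end ThetaAux

/-- `ϑ'` is multiplicative over tensor products of commutative association schemes: for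
commutative association schemes `S₁, S₂` with distinguished relation sets `D₁ ⊆ R₁`,
`D₂ ⊆ R₂` containing the diagonal,
`ϑ'(G_{S₁⊗S₂}(D₁⊗D₂)) = ϑ'(G_{S₁}(D₁)) · ϑ'(G_{S₂}(D₂))`, where `G_S(D)` joins `x ≠ y`
whenever the relation of `(x,y)` lies outside `D`. -/
theorem thetaPrime_tensor (X₁ X₂ : Type*) [Fintype X₁] [Fintype X₂]
    (S₁ : AssocScheme X₁) (S₂ : AssocScheme X₂)
    (hc₁ : S₁.Commutative) (hc₂ : S₂.Commutative)
    (D₁ : Set (Set (X₁ × X₁))) (D₂ : Set (Set (X₂ × X₂)))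
    (hD₁ : D₁ ⊆ S₁.rels) (hD₂ : D₂ ⊆ S₂.rels)
    (hdiag₁ : {p : X₁ × X₁ | p.1 = p.2} ∈ D₁) (hdiag₂ : {p : X₂ × X₂ | p.1 = p.2} ∈ D₂) :
    thetaPrime (X₁ × X₂)
        (fun x y => x ≠ y ∧
          ¬((∃ r ∈ D₁, (x.1, y.1) ∈ r) ∧ (∃ r ∈ D₂, (x.2, y.2) ∈ r))) =
      thetaPrime X₁ (fun x y => x ≠ y ∧ ¬∃ r ∈ D₁, (x, y) ∈ r) *
        thetaPrime X₂ (fun x y => x ≠ y ∧ ¬∃ r ∈ D₂, (x, y) ∈ r) := by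
  classical
  obtain ⟨p₁, -⟩ := S₁.nonempty_rel _ S₁.diag_mem
  obtain ⟨p₂, -⟩ := S₂.nonempty_rel _ S₂.diag_mem
  haveI : Nonempty X₁ := ⟨p₁.1⟩
  haveI : Nonempty X₂ := ⟨p₂.1⟩
  set A₁ : X₁ → X₁ → Prop := fun x y => x ≠ y ∧ ¬∃ r ∈ D₁, (x, y) ∈ r with hA₁
  set A₂ : X₂ → X₂ → Prop := fun x y => x ≠ y ∧ ¬∃ r ∈ D₂, (x, y) ∈ r with hA₂
  set AP : X₁ × X₂ → X₁ × X₂ → Prop := fun x y => x ≠ y ∧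
      ¬((∃ r ∈ D₁, (x.1, y.1) ∈ r) ∧ (∃ r ∈ D₂, (x.2, y.2) ∈ r)) with hAP
  have hne₁ : ∀ u v : X₁, A₁ u v → u ≠ v := fun u v h => h.1
  have hne₂ : ∀ u v : X₂, A₂ u v → u ≠ v := fun u v h => h.1
  have hneP : ∀ u v : X₁ × X₂, AP u v → u ≠ v := fun u v h => h.1
  have hθ₁ : (1:ℝ) ≤ thetaPrime X₁ A₁ := one_le_thetaPrime hne₁
  have hθ₂ : (1:ℝ) ≤ thetaPrime X₂ A₂ := one_le_thetaPrime hne₂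
  have hOr : ∀ p q : X₁ × X₂, AP p q → A₁ p.1 q.1 ∨ A₂ p.2 q.2 := by
    rintro p q ⟨hpq, hnot⟩
    by_cases h₁ : ∃ r ∈ D₁, (p.1, q.1) ∈ r
    · refine Or.inr ⟨?_, fun hex => hnot ⟨h₁, hex⟩⟩
      intro heq
      exact hnot ⟨h₁, ⟨_, hdiag₂, heq⟩⟩
    · refine Or.inl ⟨?_, h₁⟩
      intro heq
      exact h₁ ⟨_, hdiag₁, heq⟩
  have hVP : ∀ x y a b, A₁ x y → AP (x, a) (y, b) := by
    rintro x y a b ⟨hxy, hnr⟩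
    exact ⟨fun h => hxy (congrArg Prod.fst h), fun h => hnr h.1⟩
  have hWP : ∀ x a b, A₂ a b → AP (x, a) (x, b) := by
    rintro x a b ⟨hab, hnr⟩
    exact ⟨fun h => hab (congrArg Prod.snd h), fun h => hnr h.2⟩
  apply le_antisymm
  · rw [thetaPrime_eq]
    refine csSup_le ⟨1, one_mem_thetaSet hneP⟩ fun t ht => ?_
    exact le_mul_of_mem_prod A₁ A₂ AP hVP hWP (le_trans zero_le_one hθ₁) ht
  · set c := thetaPrime (X₁ × X₂) AP with hc
    have hc1 : (1:ℝ) ≤ c := one_le_thetaPrime hneP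
    have hθ₁pos : (0:ℝ) < thetaPrime X₁ A₁ := lt_of_lt_of_le zero_lt_one hθ₁
    have hkey : ∀ t₁ ∈ thetaSet X₁ A₁, ∀ t₂ ∈ thetaSet X₂ A₂, t₁ * t₂ ≤ c :=
      fun t₁ h1 t₂ h2 =>
        le_csSup (thetaSet_bddAbove AP) (mul_mem_thetaSet_prod A₁ A₂ AP hOr h1 h2)
  -- for every t₂, θ₁ * t₂ ≤ c
    have h2 : ∀ t₂ ∈ thetaSet X₂ A₂, thetaPrime X₁ A₁ * t₂ ≤ c := by
      intro t₂ ht₂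
      rcases le_or_gt t₂ 0 with h | h
      · calc thetaPrime X₁ A₁ * t₂ ≤ 0 :=
              mul_nonpos_of_nonneg_of_nonpos hθ₁pos.le h
          _ ≤ c := le_trans zero_le_one hc1
      · have hall : ∀ t₁ ∈ thetaSet X₁ A₁, t₁ ≤ c / t₂ := fun t₁ ht₁ =>
          (le_div_iff₀ h).mpr (hkey t₁ ht₁ t₂ ht₂)
        have hθ : thetaPrime X₁ A₁ ≤ c / t₂ := by
          rw [thetaPrime_eq]
          exact csSup_le ⟨1, one_mem_thetaSet hne₁⟩ hall
        calc thetaPrime X₁ A₁ * t₂ ≤ (c / t₂) * t₂ :=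
              mul_le_mul_of_nonneg_right hθ h.le
          _ = c := div_mul_cancel₀ _ h.ne'
    have h3 : ∀ t₂ ∈ thetaSet X₂ A₂, t₂ ≤ c / thetaPrime X₁ A₁ := fun t₂ ht₂ =>
      (le_div_iff₀ hθ₁pos).mpr (by rw [mul_comm]; exact h2 _ ht₂)
    have h4 : thetaPrime X₂ A₂ ≤ c / thetaPrime X₁ A₁ := by
      rw [thetaPrime_eq]
      exact csSup_le ⟨1, one_mem_thetaSet hne₂⟩ h3
    calc thetaPrime X₁ A₁ * thetaPrime X₂ A₂
        ≤ thetaPrime X₁ A₁ * (c / thetaPrime X₁ A₁) :=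
          mul_le_mul_of_nonneg_left h4 hθ₁pos.le
      _ = c := mul_div_cancel₀ _ hθ₁pos.ne'
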